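/- Let k ≥ 2, H ≥ 2, δ ∈ (0,1/8). Suppose p ∈ [0,1] satisfies n·p^{H-1} ≤ k-1 where Z_l ~ Bin(n, p^l). Then (Σ_{l=0}^{H-1} 2^{l+1}·P(Z_l ≤ k-1)) / (2^{H+1} - 1) ≥ 1/4 > δ. Consequently, any p satisfying the near-broadcast condition (LHS ≤ δ) must satisfy p > ((k-1)/n)^{1/(H-1)}. -/

import Mathlib

/-!
All weights `2 ^ (l + 1) * ℙ(Z_l ≤ k - 1)` are nonnegative and the top one alone is
`2 ^ H * ℙ(Z_{H-1} ≤ k - 1)`, so the first claim reduces to the median bound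
`ℙ(Bin(n, q) ≤ m) ≥ 1/2` whenever `n q ≤ m`; the second claim is the contrapositive of the
first.

For the median bound with `m < n ≤ 2 m`, each upper-tail atom `m + 1 + j` is dominated by the
lower-tail atom `m - j`. For `n > 2 m` the lower tail is the incomplete Beta integral
`1 - (n - m) C(n, m) ∫₀^q t^m (1 - t)^(n-m-1) dt`, and the integrand is smaller to the left of
`c = m / n` than at the mirror point, so `∫₀^c ≤ ∫_c^{2c} ≤ ∫_c^1`.
-/

open Finset intervalIntegral

noncomputable def binomPMF (n : ℕ) (q : ℝ) (i : ℕ) : ℝ :=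
  (n.choose i : ℝ) * q ^ i * (1 - q) ^ (n - i)

/-- `ℙ(Bin(n, q) < k)`, the paper's `ℙ(Z ≤ k - 1)` for `Z ~ Bin(n, q)`. -/
noncomputable def binomCDFLT (n : ℕ) (q : ℝ) (k : ℕ) : ℝ :=
  ∑ i ∈ range k, binomPMF n q i

def betaIntegrand (a b : ℕ) (t : ℝ) : ℝ := t ^ a * (1 - t) ^ b

lemma binomPMF_nonneg (n i : ℕ) {q : ℝ} (hq0 : 0 ≤ q) (hq1 : q ≤ 1) :
    0 ≤ binomPMF n q i := by
  have : 0 ≤ 1 - q := by linarith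
  unfold binomPMF; positivity

lemma binomCDFLT_nonneg (n k : ℕ) {q : ℝ} (hq0 : 0 ≤ q) (hq1 : q ≤ 1) :
    0 ≤ binomCDFLT n q k :=
  sum_nonneg fun i _ => binomPMF_nonneg n i hq0 hq1

lemma binomCDFLT_succ_self (n : ℕ) (q : ℝ) : binomCDFLT n q (n + 1) = 1 := by
  have h := add_pow q (1 - q) n
  rw [add_sub_cancel, one_pow] at h
  rw [h, binomCDFLT]
  exact sum_congr rfl fun i _ => by unfold binomPMF; ring

lemma binomCDFLT_of_lt {n k : ℕ} (hnk : n < k) (q : ℝ) : binomCDFLT n q k = 1 := by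
  rw [← binomCDFLT_succ_self n q, binomCDFLT, binomCDFLT]
  refine (sum_subset (range_subset_range.2 hnk) fun i _ hi => ?_).symm
  simp [binomPMF, Nat.choose_eq_zero_of_lt (by simpa using hi : n < i)]

lemma binomCDFLT_succ_zero (n m : ℕ) : binomCDFLT n 0 (m + 1) = 1 := by
  simp [binomCDFLT, sum_range_succ', binomPMF]

lemma binomCDFLT_succ_one {n m : ℕ} (hmn : m < n) : binomCDFLT n 1 (m + 1) = 0 :=
  sum_eq_zero fun i hi => by
    simp [binomPMF, zero_pow (by simp at hi; omega : n - i ≠ 0)]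

lemma hasDerivAt_pow_mul_one_sub_pow (a b : ℕ) (t : ℝ) :
    HasDerivAt (fun t : ℝ => t ^ a * (1 - t) ^ b)
      (a * t ^ (a - 1) * (1 - t) ^ b - b * t ^ a * (1 - t) ^ (b - 1)) t := by
  refine ((hasDerivAt_pow a t).fun_mul (((hasDerivAt_id t).const_sub 1).fun_pow b)).congr_deriv ?_
  simp; ring

lemma hasDerivAt_binomCDFLT_succ {n m : ℕ} (hmn : m < n) (q : ℝ) :
    HasDerivAt (fun q => binomCDFLT n q (m + 1))
      (-(((n : ℝ) - m) * n.choose m * betaIntegrand m (n - m - 1) q)) q := by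
  induction m with
  | zero =>
    simp only [binomCDFLT, binomPMF, betaIntegrand, zero_add, sum_range_one, Nat.choose_zero_right,
      Nat.cast_one, pow_zero, one_mul, Nat.sub_zero, Nat.cast_zero, sub_zero]
    refine (((hasDerivAt_id q).const_sub 1).fun_pow n).congr_deriv ?_
    simp
  | succ m ih =>
    have hchoose : (n.choose (m + 1) : ℝ) * (m + 1) = n.choose m * ((n : ℝ) - m) := by
      rw [← Nat.cast_sub (by omega : m ≤ n)]; exact_mod_cast Nat.choose_succ_right_eq n m
    have hterm := (hasDerivAt_pow_mul_one_sub_pow (m + 1) (n - (m + 1)) q).const_mul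
      (n.choose (m + 1) : ℝ)
    have hsum : (fun q => binomCDFLT n q (m + 1 + 1)) = fun q =>
        binomCDFLT n q (m + 1) + n.choose (m + 1) * (q ^ (m + 1) * (1 - q) ^ (n - (m + 1))) := by
      ext q; rw [binomCDFLT, sum_range_succ, binomPMF, mul_assoc]; rfl
    rw [hsum]
    refine ((ih (by omega)).add hterm).congr_deriv ?_
    rw [Nat.cast_sub (by omega : m + 1 ≤ n), Nat.sub_sub, add_tsub_cancel_right, betaIntegrand,
      betaIntegrand]
    push_cast
    linear_combination (q ^ m * (1 - q) ^ (n - (m + 1))) * hchoose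

lemma continuous_betaIntegrand (a b : ℕ) : Continuous (betaIntegrand a b) := by
  unfold betaIntegrand; fun_prop

lemma betaIntegrand_nonneg (a b : ℕ) {t : ℝ} (ht0 : 0 ≤ t) (ht1 : t ≤ 1) :
    0 ≤ betaIntegrand a b t := by
  have : 0 ≤ 1 - t := by linarith
  unfold betaIntegrand; positivity

lemma binomCDFLT_succ_eq_one_sub_integral {n m : ℕ} (hmn : m < n) (q : ℝ) :
    binomCDFLT n q (m + 1) =
      1 - ((n : ℝ) - m) * n.choose m * ∫ t in (0 : ℝ)..q, betaIntegrand m (n - m - 1) t := by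
  have hFTC := integral_eq_sub_of_hasDerivAt (fun t _ => hasDerivAt_binomCDFLT_succ hmn t)
    (((continuous_betaIntegrand m (n - m - 1)).intervalIntegrable 0 q).const_mul _).neg
  rw [integral_neg, integral_const_mul, binomCDFLT_succ_zero] at hFTC
  linarith

lemma hasDerivAt_log_add_sub_log_sub {a y : ℝ} (h₁ : 0 < a + y) (h₂ : 0 < a - y) :
    HasDerivAt (fun x => Real.log (a + x) - Real.log (a - x)) (2 * a / (a ^ 2 - y ^ 2)) y := by
  have hadd := ((hasDerivAt_id y).const_add a).log h₁.ne'
  have hsub := ((hasDerivAt_id y).const_sub a).log h₂.ne'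
  refine (hadd.sub hsub).congr_deriv ?_
  rw [id, show a ^ 2 - y ^ 2 = (a + y) * (a - y) by ring]
  field_simp
  ring

/-- The reflection of `betaIntegrand m (b - 1)` about `m / (m + b)`, rescaled by `m + b`. -/
lemma pow_sub_mul_pow_add_le {m b : ℕ} (hmb : m < b) {x : ℝ} (hx0 : 0 ≤ x) (hxm : x ≤ m) :
    ((m : ℝ) - x) ^ m * ((b : ℝ) + x) ^ (b - 1) ≤
      ((m : ℝ) + x) ^ m * ((b : ℝ) - x) ^ (b - 1) := by
  have hmb' : (m : ℝ) + 1 ≤ b := by exact_mod_cast hmb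
  obtain rfl | hxm := hxm.eq_or_lt
  · obtain rfl | hm := m.eq_zero_or_pos
    · simp
    · rw [sub_self, zero_pow hm.ne', zero_mul]
      have : (0 : ℝ) ≤ b - m := by linarith
      positivity
  set F : ℝ → ℝ := fun y => m * (Real.log (m + y) - Real.log (m - y)) -
    ((b - 1 : ℕ) : ℝ) * (Real.log (b + y) - Real.log (b - y))
  set F' : ℝ → ℝ := fun y => m * (2 * m / ((m : ℝ) ^ 2 - y ^ 2)) -
    ((b - 1 : ℕ) : ℝ) * (2 * b / ((b : ℝ) ^ 2 - y ^ 2))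
  have hF : ∀ y ∈ Set.Icc 0 x, HasDerivAt F (F' y) y := fun y hy =>
    ((hasDerivAt_log_add_sub_log_sub (by linarith [hy.1]) (by linarith [hy.2])).const_mul _).sub
      ((hasDerivAt_log_add_sub_log_sub (by linarith [hy.1]) (by linarith [hy.2])).const_mul _)
  have hF' : ∀ y ∈ Set.Icc 0 x, 0 ≤ F' y := by
    rintro y ⟨hy0, hyx⟩
    simp only [F']
    rw [Nat.cast_sub (by omega : 1 ≤ b), Nat.cast_one, sub_nonneg, mul_div_assoc', mul_div_assoc',
      div_le_div_iff₀ (by nlinarith) (by nlinarith)]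
    have hy2 : y ^ 2 ≤ (m : ℝ) ^ 2 := pow_le_pow_left₀ hy0 (by linarith) 2
    rcases le_total ((m : ℝ) ^ 2) ((b : ℝ) ^ 2 - b) with h | h
    · nlinarith [mul_nonneg (sq_nonneg y) (sub_nonneg.2 h)]
    · nlinarith [mul_le_mul_of_nonneg_right hy2 (sub_nonneg.2 h)]
  have hmono : MonotoneOn F (Set.Icc 0 x) :=
    monotoneOn_of_hasDerivWithinAt_nonneg (convex_Icc 0 x)
      (fun y hy => (hF y hy).continuousAt.continuousWithinAt)
      (fun y hy => (hF y (interior_subset hy)).hasDerivWithinAt)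
      (fun y hy => hF' y (interior_subset hy))
  have hFx : F 0 ≤ F x := hmono ⟨le_rfl, hx0⟩ ⟨hx0, le_rfl⟩ hx0
  have h1 : 0 < (m : ℝ) - x := by linarith
  have h2 : 0 < (b : ℝ) - x := by linarith
  have h3 : 0 < (m : ℝ) + x := by linarith
  have h4 : 0 < (b : ℝ) + x := by linarith
  rw [← Real.log_le_log_iff (by positivity) (by positivity),
    Real.log_mul (by positivity) (by positivity), Real.log_mul (by positivity) (by positivity),
    Real.log_pow, Real.log_pow, Real.log_pow, Real.log_pow]
  simp only [F, add_zero, sub_zero, sub_self, mul_zero] at hFx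
  linarith

lemma betaIntegrand_sub_le_add {m n : ℕ} (h2m : 2 * m < n) {x : ℝ} (hx0 : 0 ≤ x)
    (hxc : x ≤ m / n) :
    betaIntegrand m (n - m - 1) (m / n - x) ≤ betaIntegrand m (n - m - 1) (m / n + x) := by
  have hn : (0 : ℝ) < n := by exact_mod_cast (by omega : 0 < n)
  have hnx : n * x ≤ m := by rwa [le_div_iff₀ hn, mul_comm] at hxc
  have key := pow_sub_mul_pow_add_le (by omega : m < n - m) (mul_nonneg hn.le hx0) hnx
  rw [Nat.cast_sub (by omega)] at key
  have e₁ : (m : ℝ) / n - x = (m - n * x) / n := by field_simp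
  have e₂ : 1 - ((m : ℝ) / n - x) = (n - m + n * x) / n := by field_simp; ring
  have e₃ : (m : ℝ) / n + x = (m + n * x) / n := by field_simp
  have e₄ : 1 - ((m : ℝ) / n + x) = (n - m - n * x) / n := by field_simp; ring
  rw [betaIntegrand, betaIntegrand, e₂, e₄, e₁, e₃, div_pow, div_pow, div_pow, div_pow,
    div_mul_div_comm, div_mul_div_comm]
  exact div_le_div_of_nonneg_right key (by positivity)

lemma two_mul_integral_betaIntegrand_le {m n : ℕ} (h2m : 2 * m < n) :
    2 * ∫ t in (0 : ℝ)..m / n, betaIntegrand m (n - m - 1) t ≤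
      ∫ t in (0 : ℝ)..1, betaIntegrand m (n - m - 1) t := by
  set g := betaIntegrand m (n - m - 1)
  set c : ℝ := m / n
  have hg := continuous_betaIntegrand m (n - m - 1)
  have hn : (0 : ℝ) < n := by exact_mod_cast (by omega : 0 < n)
  have hc0 : 0 ≤ c := by positivity
  have hc1 : c + c ≤ 1 := by
    rw [← add_div, div_le_one hn]; exact_mod_cast (by omega : m + m ≤ n)
  have hreflect : ∫ t in (0 : ℝ)..c, g t ≤ ∫ t in c..c + c, g t := by
    calc ∫ t in (0 : ℝ)..c, g t = ∫ x in (0 : ℝ)..c, g (c - x) := by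
          rw [integral_comp_sub_left]; simp
      _ ≤ ∫ x in (0 : ℝ)..c, g (x + c) :=
          integral_mono_on hc0 ((hg.comp (by fun_prop)).intervalIntegrable _ _)
            ((hg.comp (by fun_prop)).intervalIntegrable _ _)
            fun x hx => by rw [add_comm]; exact betaIntegrand_sub_le_add h2m hx.1 hx.2
      _ = ∫ t in c..c + c, g t := by rw [integral_comp_add_right]; simp
  have htail : 0 ≤ ∫ t in c + c..1, g t :=
    integral_nonneg hc1 fun t ht => betaIntegrand_nonneg _ _ (by linarith [ht.1]) ht.2
  rw [← integral_add_adjacent_intervals (hg.intervalIntegrable 0 c) (hg.intervalIntegrable c 1),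
    ← integral_add_adjacent_intervals (hg.intervalIntegrable c (c + c))
      (hg.intervalIntegrable _ 1)]
  linarith

lemma half_le_binomCDFLT_succ_of_two_mul_lt {n m : ℕ} (h2m : 2 * m < n) {q : ℝ} (hq0 : 0 ≤ q)
    (hmean : n * q ≤ m) : 1 / 2 ≤ binomCDFLT n q (m + 1) := by
  have hmn : m < n := by omega
  have hn : (0 : ℝ) < n := by exact_mod_cast (by omega : 0 < n)
  set K : ℝ := ((n : ℝ) - m) * n.choose m
  set I : ℝ → ℝ := fun x => ∫ t in (0 : ℝ)..x, betaIntegrand m (n - m - 1) t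
  have hK : 0 ≤ K := by
    have : (m : ℝ) ≤ n := by exact_mod_cast hmn.le
    have : (0 : ℝ) ≤ (n : ℝ) - m := by linarith
    positivity
  have htotal : K * I 1 = 1 := by
    linarith [binomCDFLT_succ_eq_one_sub_integral hmn 1, binomCDFLT_succ_one hmn]
  have hqc : q ≤ m / n := by rwa [le_div_iff₀ hn, mul_comm]
  have hc1 : m / n ≤ (1 : ℝ) := by rw [div_le_one hn]; exact_mod_cast hmn.le
  have hmono : I q ≤ I (m / n) :=
    integral_mono_interval le_rfl hq0 hqc
      (MeasureTheory.ae_restrict_of_forall_mem measurableSet_Ioc fun t ht =>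
        betaIntegrand_nonneg _ _ ht.1.le (ht.2.trans hc1))
      ((continuous_betaIntegrand _ _).intervalIntegrable _ _)
  rw [binomCDFLT_succ_eq_one_sub_integral hmn]
  nlinarith [mul_le_mul_of_nonneg_left hmono hK,
    mul_le_mul_of_nonneg_left (two_mul_integral_betaIntegrand_le h2m) hK]

lemma choose_mul_pow_le_choose_mul_pow {n m j : ℕ} (h2m : n ≤ 2 * m) (hj : j < n - m) :
    (n.choose (m + 1 + j) : ℝ) * m ^ (2 * j + 1) ≤
      n.choose (m - j) * ((n : ℝ) - m) ^ (2 * j + 1) := by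
  induction j with
  | zero =>
    have h := Nat.choose_succ_right_eq n m
    rw [← Nat.cast_inj (R := ℝ), Nat.cast_mul, Nat.cast_mul, Nat.cast_sub (by omega)] at h
    simp only [mul_zero, zero_add, add_zero, pow_one, Nat.sub_zero]
    push_cast at h
    nlinarith [(n.choose (m + 1)).cast_nonneg (α := ℝ)]
  | succ j ih =>
    set M : ℝ := (m : ℝ)
    set B : ℝ := (n : ℝ) - m
    set J : ℝ := (j : ℝ)
    have hMB : B ≤ M := by
      have : (n : ℝ) ≤ 2 * m := by exact_mod_cast h2m
      simp only [B, M]; linarith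
    have hJB : J + 2 ≤ B := by
      simp only [B, J]
      rw [← Nat.cast_sub (by omega)]
      exact_mod_cast (by omega : j + 2 ≤ n - m)
    have hJ0 : 0 ≤ J := j.cast_nonneg
    have e₁ : (n.choose (m + 1 + (j + 1)) : ℝ) * (M + 2 + J) =
        n.choose (m + 1 + j) * (B - 1 - J) := by
      have h := Nat.choose_succ_right_eq n (m + 1 + j)
      rw [← Nat.cast_inj (R := ℝ), Nat.cast_mul, Nat.cast_mul, Nat.cast_sub (by omega)] at h
      push_cast at h
      simp only [M, B, J]
      linear_combination h
    have e₂ : (n.choose (m - j) : ℝ) * (M - J) = n.choose (m - (j + 1)) * (B + 1 + J) := by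
      have h := Nat.choose_succ_right_eq n (m - (j + 1))
      rw [show m - (j + 1) + 1 = m - j by omega] at h
      rw [← Nat.cast_inj (R := ℝ), Nat.cast_mul, Nat.cast_mul,
        Nat.cast_sub (by omega : j ≤ m), Nat.cast_sub (by omega : m - (j + 1) ≤ n),
        Nat.cast_sub (by omega : j + 1 ≤ m)] at h
      push_cast at h
      simp only [M, B, J]
      linear_combination h
    have hscalar : (B - 1 - J) * (B + 1 + J) * M ^ 2 ≤ (M - J) * (M + 2 + J) * B ^ 2 := by
      have hMB' : 0 ≤ (M - B) * (M + B) := mul_nonneg (by linarith) (by linarith)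
      nlinarith [mul_nonneg (sq_nonneg (J + 1)) hMB']
    have hD : 0 < (M + 2 + J) * (B + 1 + J) := by nlinarith
    refine le_of_mul_le_mul_right ?_ hD
    calc (n.choose (m + 1 + (j + 1)) : ℝ) * M ^ (2 * (j + 1) + 1) * ((M + 2 + J) * (B + 1 + J))
        = (n.choose (m + 1 + j) * M ^ (2 * j + 1)) * ((B - 1 - J) * (B + 1 + J) * M ^ 2) := by
          linear_combination (M ^ (2 * j + 1) * M ^ 2 * (B + 1 + J)) * e₁
      _ ≤ (n.choose (m - j) * B ^ (2 * j + 1)) * ((M - J) * (M + 2 + J) * B ^ 2) :=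
          mul_le_mul (ih (by omega)) hscalar
            (mul_nonneg (mul_nonneg (by linarith) (by linarith)) (sq_nonneg M))
            (mul_nonneg (Nat.cast_nonneg _) (pow_nonneg (by linarith) _))
      _ = n.choose (m - (j + 1)) * B ^ (2 * (j + 1) + 1) * ((M + 2 + J) * (B + 1 + J)) := by
          linear_combination ((M + 2 + J) * B ^ (2 * j + 1) * B ^ 2) * e₂

lemma binomPMF_le_binomPMF_of_le_two_mul {n m j : ℕ} (h2m : n ≤ 2 * m) (hj : j < n - m)
    {q : ℝ} (hq0 : 0 ≤ q) (hq1 : q ≤ 1) (hmean : n * q ≤ m) :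
    binomPMF n q (m + 1 + j) ≤ binomPMF n q (m - j) := by
  have hmn : (m : ℝ) < n := by exact_mod_cast (by omega : m < n)
  have hm : (0 : ℝ) < m := by exact_mod_cast (by omega : 0 < m)
  have hq1' : 0 ≤ 1 - q := by linarith
  have hodds : (n.choose (m + 1 + j) : ℝ) * q ^ (2 * j + 1) ≤
      n.choose (m - j) * (1 - q) ^ (2 * j + 1) := by
    set e := 2 * j + 1
    set B : ℝ := (n : ℝ) - m
    have hratio : (q * B) ^ e ≤ ((1 - q) * m) ^ e :=
      pow_le_pow_left₀ (mul_nonneg hq0 (by linarith)) (by linarith) _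
    have hpos : 0 < ((m : ℝ) * B) ^ e := pow_pos (by nlinarith) _
    refine le_of_mul_le_mul_right ?_ hpos
    calc (n.choose (m + 1 + j) : ℝ) * q ^ e * ((m : ℝ) * B) ^ e
        = (n.choose (m + 1 + j) * (m : ℝ) ^ e) * (q * B) ^ e := by rw [mul_pow, mul_pow]; ring
      _ ≤ (n.choose (m - j) * B ^ e) * ((1 - q) * m) ^ e :=
          mul_le_mul (choose_mul_pow_le_choose_mul_pow h2m hj) hratio (by positivity)
            (mul_nonneg (Nat.cast_nonneg _) (pow_nonneg (by linarith) _))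
      _ = n.choose (m - j) * (1 - q) ^ e * ((m : ℝ) * B) ^ e := by rw [mul_pow, mul_pow]; ring
  have hcommon : 0 ≤ q ^ (m - j) * (1 - q) ^ (n - m - 1 - j) := by positivity
  calc binomPMF n q (m + 1 + j)
      = n.choose (m + 1 + j) * q ^ (2 * j + 1) * (q ^ (m - j) * (1 - q) ^ (n - m - 1 - j)) := by
        rw [binomPMF, show n - (m + 1 + j) = n - m - 1 - j by omega,
          show m + 1 + j = 2 * j + 1 + (m - j) by omega, pow_add]
        ring
    _ ≤ n.choose (m - j) * (1 - q) ^ (2 * j + 1) * (q ^ (m - j) * (1 - q) ^ (n - m - 1 - j)) :=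
        mul_le_mul_of_nonneg_right hodds hcommon
    _ = binomPMF n q (m - j) := by
        rw [binomPMF, show n - (m - j) = 2 * j + 1 + (n - m - 1 - j) by omega, pow_add]
        ring

lemma half_le_binomCDFLT_succ_of_le_two_mul {n m : ℕ} (h2m : n ≤ 2 * m) (hmn : m < n) {q : ℝ}
    (hq0 : 0 ≤ q) (hq1 : q ≤ 1) (hmean : n * q ≤ m) : 1 / 2 ≤ binomCDFLT n q (m + 1) := by
  have htotal : binomCDFLT n q (m + 1) + ∑ j ∈ range (n - m), binomPMF n q (m + 1 + j) = 1 := by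
    rw [← binomCDFLT_succ_self n q, binomCDFLT, binomCDFLT, show n + 1 = m + 1 + (n - m) by omega]
    exact (sum_range_add _ _ _).symm
  have hupper : ∑ j ∈ range (n - m), binomPMF n q (m + 1 + j) ≤ binomCDFLT n q (m + 1) :=
    calc ∑ j ∈ range (n - m), binomPMF n q (m + 1 + j)
        ≤ ∑ j ∈ range (n - m), binomPMF n q (m - j) :=
          sum_le_sum fun j hj =>
            binomPMF_le_binomPMF_of_le_two_mul h2m (mem_range.1 hj) hq0 hq1 hmean
      _ ≤ ∑ j ∈ range (m + 1), binomPMF n q (m + 1 - 1 - j) :=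
          sum_le_sum_of_subset_of_nonneg (range_subset_range.2 (by omega))
            fun _ _ _ => binomPMF_nonneg _ _ hq0 hq1
      _ = binomCDFLT n q (m + 1) := sum_range_reflect _ _
  linarith

theorem half_le_binomCDFLT_succ (n m : ℕ) {q : ℝ} (hq0 : 0 ≤ q) (hmean : n * q ≤ m) :
    1 / 2 ≤ binomCDFLT n q (m + 1) := by
  obtain hnm | hmn := le_or_gt n m
  · rw [binomCDFLT_of_lt (by omega)]; norm_num
  obtain h2m | h2m := le_or_gt n (2 * m)
  · have hq1 : q ≤ 1 := by
      have : (m : ℝ) < n := by exact_mod_cast hmn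
      nlinarith
    exact half_le_binomCDFLT_succ_of_le_two_mul h2m hmn hq0 hq1 hmean
  · exact half_le_binomCDFLT_succ_of_two_mul_lt h2m hq0 hmean

lemma quarter_le_sum_two_pow_mul_div {H : ℕ} (hH : 1 ≤ H) {f : ℕ → ℝ}
    (hf : ∀ l ∈ range H, 0 ≤ f l) (hlast : 1 / 2 ≤ f (H - 1)) :
    1 / 4 ≤ (∑ l ∈ range H, (2 : ℝ) ^ (l + 1) * f l) / (2 ^ (H + 1) - 1) := by
  have hsingle :
      (2 : ℝ) ^ (H - 1 + 1) * f (H - 1) ≤ ∑ l ∈ range H, (2 : ℝ) ^ (l + 1) * f l :=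
    single_le_sum (f := fun l => (2 : ℝ) ^ (l + 1) * f l)
      (fun l hl => mul_nonneg (by positivity) (hf l hl)) (mem_range.2 (by omega))
  have hpow : (2 : ℝ) ^ (H + 1) = 2 * 2 ^ (H - 1 + 1) := by
    rw [Nat.sub_add_cancel hH, pow_succ, mul_comm]
  have hden : (1 : ℝ) < 2 ^ (H + 1) := one_lt_pow₀ (by norm_num) (by omega)
  rw [le_div_iff₀ (by linarith)]
  nlinarith [pow_pos (two_pos (α := ℝ)) (H - 1 + 1)]

lemma mul_pow_le_of_le_rpow_one_div {a x p : ℝ} {N : ℕ} (hN : N ≠ 0) (ha : 0 ≤ a)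
    (hx : 0 ≤ x) (hp0 : 0 ≤ p) (hp : p ≤ (a / x) ^ ((1 : ℝ) / N)) : x * p ^ N ≤ a := by
  obtain rfl | hx := hx.eq_or_lt
  · simpa using ha
  have hpow : p ^ N ≤ a / x := by
    calc p ^ N ≤ ((a / x) ^ ((1 : ℝ) / N)) ^ N := pow_le_pow_left₀ hp0 hp N
      _ = a / x := by rw [one_div, Real.rpow_inv_natCast_pow (by positivity) hN]
  rwa [le_div_iff₀ hx, mul_comm] at hpow

theorem tree_lower_bound_general (n k H : ℕ) (δ p : ℝ)
    (hk : 2 ≤ k) (hH : 2 ≤ H) (hδ1 : δ < 1 / 8)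
    (hp0 : 0 ≤ p) (hp1 : p ≤ 1) :
    ((n : ℝ) * p ^ (H - 1) ≤ (k : ℝ) - 1 →
      (1 : ℝ) / 4 ≤ (∑ l ∈ Finset.range H, (2 : ℝ) ^ (l + 1) *
          ∑ i ∈ Finset.range k, (n.choose i : ℝ) * (p ^ l) ^ i * (1 - p ^ l) ^ (n - i)) /
          ((2 : ℝ) ^ (H + 1) - 1) ∧ δ < (1 : ℝ) / 4) ∧
    ((∑ l ∈ Finset.range H, (2 : ℝ) ^ (l + 1) *
          ∑ i ∈ Finset.range k, (n.choose i : ℝ) * (p ^ l) ^ i * (1 - p ^ l) ^ (n - i)) /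
          ((2 : ℝ) ^ (H + 1) - 1) ≤ δ →
      (((k : ℝ) - 1) / (n : ℝ)) ^ ((1 : ℝ) / ((H : ℝ) - 1)) < p) := by
  obtain ⟨m, rfl⟩ : ∃ m, k = m + 1 := ⟨k - 1, by omega⟩
  have hlower (hmean : (n : ℝ) * p ^ (H - 1) ≤ ((m + 1 : ℕ) : ℝ) - 1) :
      1 / 4 ≤ (∑ l ∈ range H, (2 : ℝ) ^ (l + 1) * binomCDFLT n (p ^ l) (m + 1)) /
        (2 ^ (H + 1) - 1) := by
    refine quarter_le_sum_two_pow_mul_div (by omega)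
      (fun l _ => binomCDFLT_nonneg n _ (pow_nonneg hp0 l) (pow_le_one₀ hp0 hp1)) ?_
    refine half_le_binomCDFLT_succ n m (pow_nonneg hp0 _) ?_
    push_cast at hmean; linarith
  refine ⟨fun hmean => ⟨hlower hmean, by linarith⟩, fun hsmall => ?_⟩
  by_contra! hp
  have hH1 : (H : ℝ) - 1 = ((H - 1 : ℕ) : ℝ) := by
    push_cast [Nat.cast_sub (by omega : 1 ≤ H)]; ring
  rw [hH1] at hp
  have hmean :=
    mul_pow_le_of_le_rpow_one_div (by omega) (by push_cast; linarith) n.cast_nonneg hp0 hp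
  linarith [(hlower hmean).trans hsmall]

/-- Proposition 1 for binary trees: let `n ≥ k ≥ 2`, `H ≥ 2`, `δ ∈ (0,1/8)`,
`p ∈ [0,1]`, and `Z_l ~ Bin(n, p^l)`.  If `n·p^{H-1} ≤ k-1`, then
`(Σ_{l=0}^{H-1} 2^{l+1}·P(Z_l ≤ k-1))/(2^{H+1}-1) ≥ 1/4 > δ`.  Consequently, if `p` satisfies
the near-broadcast condition (LHS `≤ δ`), then `p > ((k-1)/n)^{1/(H-1)}`. -/
theorem tree_lower_bound (n k H : ℕ) (δ p : ℝ)
    (hk : 2 ≤ k) (hkn : k ≤ n) (hH : 2 ≤ H) (hδ0 : 0 < δ) (hδ1 : δ < 1 / 8)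
    (hp0 : 0 ≤ p) (hp1 : p ≤ 1) :
    ((n : ℝ) * p ^ (H - 1) ≤ (k : ℝ) - 1 →
      (1 : ℝ) / 4 ≤ (∑ l ∈ Finset.range H, (2 : ℝ) ^ (l + 1) *
          ∑ i ∈ Finset.range k, (n.choose i : ℝ) * (p ^ l) ^ i * (1 - p ^ l) ^ (n - i)) /
          ((2 : ℝ) ^ (H + 1) - 1) ∧ δ < (1 : ℝ) / 4) ∧
    ((∑ l ∈ Finset.range H, (2 : ℝ) ^ (l + 1) *
          ∑ i ∈ Finset.range k, (n.choose i : ℝ) * (p ^ l) ^ i * (1 - p ^ l) ^ (n - i)) /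
          ((2 : ℝ) ^ (H + 1) - 1) ≤ δ →
      (((k : ℝ) - 1) / (n : ℝ)) ^ ((1 : ℝ) / ((H : ℝ) - 1)) < p) :=
  tree_lower_bound_general n k H δ p hk hH hδ1 hp0 hp1
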